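/- Let H be a closed convex set in R^2 satisfying the interior sphere condition of radius d (every boundary point lies on a closed disk of radius d contained in H). Then for any x, y ∈ ∂H with unit outward normals ν(x), ν(y), we have |ν(x) − ν(y)| ≤ |x − y|/d. -/

import Mathlib

/-!
If the disk `B(c, d) ⊆ H` touches `x` and `ν` is a unit normal supporting `H` at `x`, then the
point `c + d ν` of the disk lies in `H`, which forces `c = x - d ν`. Testing the supporting
half-plane at `y` against the point `x - d νx + d νy` of the disk at `x`, and symmetrically,
gives `d ‖νx - νy‖² ≤ ⟪x - y, νx - νy⟫`; Cauchy–Schwarz concludes.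
-/

open Metric Set
open scoped RealInnerProductSpace

/-- `ν` is an outward unit normal to the convex body `H` at the boundary point `x`. -/
def IsOutwardUnitNormal  (H : Set (EuclideanSpace ℝ (Fin 2)))
    (x ν : EuclideanSpace ℝ (Fin 2)) : Prop :=
  ‖ν‖ = 1 ∧ ∀ z ∈ H, (inner ℝ (z - x) ν : ℝ) ≤ 0

section InteriorSphere

variable {E : Type*} [NormedAddCommGroup E] [InnerProductSpace ℝ E]
  {H : Set E} {c x y ν νx νy : E} {d : ℝ}

lemma add_smul_mem_of_closedBall_subset (hd : 0 ≤ d) (hν : ‖ν‖ = 1)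
    (hball : closedBall c d ⊆ H) : c + d • ν ∈ H :=
  hball <| by simp [dist_eq_norm, norm_smul, hν, abs_of_nonneg hd]

lemma center_eq_sub_smul_of_closedBall_subset (hd : 0 ≤ d) (hν : ‖ν‖ = 1)
    (hsupp : ∀ z ∈ H, ⟪z - x, ν⟫ ≤ 0) (hball : closedBall c d ⊆ H)
    (hx : x ∈ closedBall c d) : c = x - d • ν := by
  have hxc : ‖x - c‖ ≤ d := by rwa [mem_closedBall, dist_eq_norm] at hx
  have hinner : d ≤ ⟪x - c, ν⟫ := by
    have h := hsupp _ (add_smul_mem_of_closedBall_subset hd hν hball)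
    rw [show c + d • ν - x = -(x - c) + d • ν by abel, inner_add_left, inner_neg_left,
      real_inner_smul_left, real_inner_self_eq_norm_sq, hν] at h
    linarith
  have hsq : ‖x - c - d • ν‖ ^ 2 ≤ 0 := by
    rw [norm_sub_sq_real, norm_smul, real_inner_smul_right, Real.norm_of_nonneg hd, hν]
    nlinarith [norm_nonneg (x - c)]
  have hzero : x - c - d • ν = 0 :=
    norm_eq_zero.mp (pow_eq_zero_iff two_ne_zero |>.mp (le_antisymm hsq (sq_nonneg _)))
  rw [sub_sub, sub_eq_zero] at hzero
  exact eq_sub_of_add_eq hzero.symm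

lemma inner_sub_le_of_closedBall_subset (hd : 0 ≤ d) (hνy : ‖νy‖ = 1)
    (hsupp : ∀ z ∈ H, ⟪z - y, νy⟫ ≤ 0) (hball : closedBall (x - d • νx) d ⊆ H) :
    ⟪x - y, νy⟫ ≤ d * (⟪νx, νy⟫ - 1) := by
  have h := hsupp _ (add_smul_mem_of_closedBall_subset hd hνy hball)
  rw [show x - d • νx + d • νy - y = (x - y) - d • νx + d • νy by abel, inner_add_left,
    inner_sub_left, real_inner_smul_left, real_inner_smul_left, real_inner_self_eq_norm_sq,
    hνy] at h
  linarith

lemma mul_norm_sub_sq_le_inner (hd : 0 ≤ d) (hνx : ‖νx‖ = 1) (hνy : ‖νy‖ = 1)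
    (hsuppx : ∀ z ∈ H, ⟪z - x, νx⟫ ≤ 0) (hsuppy : ∀ z ∈ H, ⟪z - y, νy⟫ ≤ 0)
    (hballx : closedBall (x - d • νx) d ⊆ H) (hbally : closedBall (y - d • νy) d ⊆ H) :
    d * ‖νx - νy‖ ^ 2 ≤ ⟪x - y, νx - νy⟫ := by
  have hxy := inner_sub_le_of_closedBall_subset hd hνy hsuppy hballx
  have hyx := inner_sub_le_of_closedBall_subset hd hνx hsuppx hbally
  have hswap : ⟪y - x, νx⟫ = -⟪x - y, νx⟫ := by rw [← inner_neg_left, neg_sub]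
  rw [norm_sub_sq_real, hνx, hνy, inner_sub_right]
  rw [hswap, real_inner_comm νx νy] at hyx
  linarith

lemma norm_le_div_of_mul_norm_sq_le_inner {u v : E} (hd : 0 < d)
    (h : d * ‖u‖ ^ 2 ≤ ⟪v, u⟫) : ‖u‖ ≤ 1 / d * ‖v‖ := by
  have hcs : d * ‖u‖ ^ 2 ≤ ‖v‖ * ‖u‖ := h.trans (real_inner_le_norm v u)
  rw [one_div_mul_eq_div, le_div_iff₀ hd]
  rcases (norm_nonneg u).eq_or_lt with hu | hu
  · rw [← hu]; simp
  · nlinarith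

end InteriorSphere

theorem gauss_map_lipschitz_of_interior_sphere_general 
    (H : Set (EuclideanSpace ℝ (Fin 2)))
    (d : ℝ) (hd : 0 < d)
    (hsphere : ∀ p ∈ frontier H, ∃ c, p ∈ Metric.closedBall c d ∧
      Metric.closedBall c d ⊆ H) :
    ∀ x ∈ frontier H, ∀ y ∈ frontier H, ∀ νx νy,
      IsOutwardUnitNormal H x νx → IsOutwardUnitNormal H y νy →
      ‖νx - νy‖ ≤ (1 / d) * ‖x - y‖ := by
  intro x hx y hy νx νy ⟨hνx, hsuppx⟩ ⟨hνy, hsuppy⟩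
  have hball : ∀ p ∈ frontier H, ∀ ν, ‖ν‖ = 1 → (∀ z ∈ H, ⟪z - p, ν⟫ ≤ 0) →
      closedBall (p - d • ν) d ⊆ H := by
    intro p hp ν hν hsupp
    obtain ⟨c, hpc, hcH⟩ := hsphere p hp
    rwa [← center_eq_sub_smul_of_closedBall_subset hd.le hν hsupp hcH hpc]
  exact norm_le_div_of_mul_norm_sq_le_inner hd <|
    mul_norm_sub_sq_le_inner hd.le hνx hνy hsuppx hsuppy
      (hball x hx νx hνx hsuppx) (hball y hy νy hνy hsuppy)

/-- A closed convex set in `ℝ²` satisfying a uniform interior sphere condition of radius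
`d > 0` has a `1/d`-Lipschitz Gauss map: `|ν(x) − ν(y)| ≤ (1/d)|x − y|`. -/
theorem gauss_map_lipschitz_of_interior_sphere 
    (H : Set (EuclideanSpace ℝ (Fin 2))) (hHc : Convex ℝ H) (hHcl : IsClosed H)
    (d : ℝ) (hd : 0 < d)
    (hsphere : ∀ p ∈ frontier H, ∃ c, p ∈ Metric.closedBall c d ∧
      Metric.closedBall c d ⊆ H) :
    ∀ x ∈ frontier H, ∀ y ∈ frontier H, ∀ νx νy,
      IsOutwardUnitNormal H x νx → IsOutwardUnitNormal H y νy →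
      ‖νx - νy‖ ≤ (1 / d) * ‖x - y‖ :=
  gauss_map_lipschitz_of_interior_sphere_general H d hd hsphere
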